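/- arXiv:1603.05354 — 2 statements merged into one kernel-verified Lean document; each statement's English description precedes it below -/
import Mathlib

section
/- Consider the naming game automata model with ε = 0 on a connected simple graph with n vertices and word set of size p, under a sequential updating scheme. Then the dynamics converges to a fixed point in at most O(n²p) time steps, and at the fixed point every vertex conveys the same word. -/
variable {V W : Type*}

/-- The multiset of words conveyed to `u` by its neighbors (as a finite set). -/
def conveyed [Fintype V] [DecidableEq W] (G : SimpleGraph V) [DecidableRel G.Adj]
    (conv : V → W) (u : V) : Finset W :=
  (G.neighborFinset u).image conv

/-- `N_u`: conveyed words unknown to `u` (not in its memory). -/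
def Nset [Fintype V] [DecidableEq W] (G : SimpleGraph V) [DecidableRel G.Adj]
    (mem : V → Finset W) (conv : V → W) (u : V) : Finset W :=
  (conveyed G conv u).filter (· ∉ mem u)

/-- `B_u`: conveyed words known to `u` (already in its memory). -/
def Bset [Fintype V] [DecidableEq W] (G : SimpleGraph V) [DecidableRel G.Adj]
    (mem : V → Finset W) (conv : V → W) (u : V) : Finset W :=
  (conveyed G conv u).filter (· ∈ mem u)

/-- One update of vertex `u` under the ε = 0 local rule: if `N_u ≠ ∅`, add the
unknown conveyed words to the memory of `u` (the conveyed word is unchanged);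
otherwise collapse the state of `u` to `({min B_u}, min B_u)`. A configuration is
a pair (memories, conveyed words). -/
noncomputable def step [Fintype V] [DecidableEq V] [DecidableEq W] [LinearOrder W]
    (G : SimpleGraph V) [DecidableRel G.Adj]
    (c : (V → Finset W) × (V → W)) (u : V) : (V → Finset W) × (V → W) :=
  if (Nset G c.1 c.2 u).Nonempty then
    (Function.update c.1 u (c.1 u ∪ Nset G c.1 c.2 u), c.2)
  else if hB : (Bset G c.1 c.2 u).Nonempty then
    (Function.update c.1 u {(Bset G c.1 c.2 u).min' hB},
     Function.update c.2 u ((Bset G c.1 c.2 u).min' hB))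
  else c

set_option linter.unusedSectionVars false
set_option linter.unusedVariables false

section Aux
variable [Fintype V] [DecidableEq V] [DecidableEq W] [LinearOrder W]
  (G : SimpleGraph V) [DecidableRel G.Adj]

lemma mem_conveyed {conv : V → W} {u : V} {w : W} :
    w ∈ conveyed G conv u ↔ ∃ v, G.Adj u v ∧ conv v = w := by
  simp [conveyed, SimpleGraph.mem_neighborFinset]

lemma step_fst_ne (c : (V → Finset W) × (V → W)) (u v : V) (h : v ≠ u) :
    (step G c u).1 v = c.1 v := by
  unfold step; split_ifs <;> simp [Function.update_of_ne h]

lemma step_snd_ne (c : (V → Finset W) × (V → W)) (u v : V) (h : v ≠ u) :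
    (step G c u).2 v = c.2 v := by
  unfold step; split_ifs <;> simp [Function.update_of_ne h]

lemma step_snd_grow (c : (V → Finset W) × (V → W)) (u : V)
    (h : (Nset G c.1 c.2 u).Nonempty) : (step G c u).2 = c.2 := by
  unfold step; simp [h]

lemma step_fst_grow (c : (V → Finset W) × (V → W)) (u : V)
    (h : (Nset G c.1 c.2 u).Nonempty) :
    (step G c u).1 u = c.1 u ∪ Nset G c.1 c.2 u := by
  unfold step; simp [h]

lemma step_idle (c : (V → Finset W) × (V → W)) (u : V)
    (h1 : ¬ (Nset G c.1 c.2 u).Nonempty) (h2 : ¬ (Bset G c.1 c.2 u).Nonempty) :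
    step G c u = c := by
  unfold step; simp [h1, h2]

lemma step_collapse (c : (V → Finset W) × (V → W)) (u : V)
    (h1 : ¬ (Nset G c.1 c.2 u).Nonempty) (h2 : (Bset G c.1 c.2 u).Nonempty) :
    (step G c u).1 u = {(Bset G c.1 c.2 u).min' h2} ∧
    (step G c u).2 u = (Bset G c.1 c.2 u).min' h2 := by
  unfold step; simp [h1, h2]

/-- elements of Bset come from neighbors and lie in memory -/
lemma mem_Bset {c : (V → Finset W) × (V → W)} {u : V} {b : W}
    (hb : b ∈ Bset G c.1 c.2 u) : (∃ v, G.Adj u v ∧ c.2 v = b) ∧ b ∈ c.1 u := by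
  simp only [Bset, Finset.mem_filter] at hb
  exact ⟨(mem_conveyed G).1 hb.1, hb.2⟩

/-- a conveyed word not in Nset is in memory -/
lemma conveyed_not_Nset {c : (V → Finset W) × (V → W)} {u : V} {w : W}
    (hw : w ∈ conveyed G c.2 u) (hN : ¬ (Nset G c.1 c.2 u).Nonempty) :
    w ∈ c.1 u ∧ w ∈ Bset G c.1 c.2 u := by
  rw [Finset.not_nonempty_iff_eq_empty] at hN
  by_cases h : w ∈ c.1 u
  · exact ⟨h, by simp [Bset, Finset.mem_filter, hw, h]⟩
  · exfalso
    have : w ∈ Nset G c.1 c.2 u := by simp [Nset, Finset.mem_filter, hw, h]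
    simp [hN] at this

/-- conv ∈ mem is preserved -/
lemma step_inv (c : (V → Finset W) × (V → W)) (u : V)
    (h : ∀ v, c.2 v ∈ c.1 v) : ∀ v, (step G c u).2 v ∈ (step G c u).1 v := by
  intro v
  by_cases hv : v = u
  · subst hv
    by_cases hN : (Nset G c.1 c.2 v).Nonempty
    · rw [step_fst_grow G c v hN, step_snd_grow G c v hN]
      exact Finset.mem_union_left _ (h v)
    · by_cases hB : (Bset G c.1 c.2 v).Nonempty
      · obtain ⟨h1, h2⟩ := step_collapse G c v hN hB
        rw [h1, h2]; simp
      · rw [step_idle G c v hN hB]; exact h v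
  · rw [step_fst_ne G c u v hv, step_snd_ne G c u v hv]; exact h v

/-- memories and conveyed words stay inside S0 -/
lemma step_S0 (c : (V → Finset W) × (V → W)) (u : V) (S0 : Finset W)
    (hconv : ∀ v, c.2 v ∈ S0) (hmem : ∀ v, c.1 v ⊆ S0) :
    (∀ v, (step G c u).2 v ∈ S0) ∧ (∀ v, (step G c u).1 v ⊆ S0) := by
  constructor
  · intro v
    by_cases hv : v = u
    · subst hv
      by_cases hN : (Nset G c.1 c.2 v).Nonempty
      · rw [step_snd_grow G c v hN]; exact hconv v
      · by_cases hB : (Bset G c.1 c.2 v).Nonempty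
        · rw [(step_collapse G c v hN hB).2]
          obtain ⟨⟨w, _, hw⟩, _⟩ := mem_Bset G (Finset.min'_mem _ hB)
          exact hw ▸ hconv w
        · rw [step_idle G c v hN hB]; exact hconv v
    · rw [step_snd_ne G c u v hv]; exact hconv v
  · intro v
    by_cases hv : v = u
    · subst hv
      by_cases hN : (Nset G c.1 c.2 v).Nonempty
      · rw [step_fst_grow G c v hN]
        apply Finset.union_subset (hmem v)
        intro w hw
        simp only [Nset, Finset.mem_filter] at hw
        obtain ⟨x, _, hx⟩ := (mem_conveyed G).1 hw.1
        exact hx ▸ hconv x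
      · by_cases hB : (Bset G c.1 c.2 v).Nonempty
        · rw [(step_collapse G c v hN hB).1]
          obtain ⟨⟨w, _, hw⟩, _⟩ := mem_Bset G (Finset.min'_mem _ hB)
          simp [Finset.singleton_subset_iff, hw ▸ hconv w]
        · rw [step_idle G c v hN hB]; exact hmem v
    · rw [step_fst_ne G c u v hv]; exact hmem v

/-- lower bound on conveyed words is preserved -/
lemma step_LB (c : (V → Finset W) × (V → W)) (u : V) (m : W)
    (h : ∀ v, m ≤ c.2 v) : ∀ v, m ≤ (step G c u).2 v := by
  intro v
  by_cases hv : v = u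
  · subst hv
    by_cases hN : (Nset G c.1 c.2 v).Nonempty
    · rw [step_snd_grow G c v hN]; exact h v
    · by_cases hB : (Bset G c.1 c.2 v).Nonempty
      · rw [(step_collapse G c v hN hB).2]
        obtain ⟨⟨w, _, hw⟩, _⟩ := mem_Bset G (Finset.min'_mem _ hB)
        exact hw ▸ h w
      · rw [step_idle G c v hN hB]; exact h v
  · rw [step_snd_ne G c u v hv]; exact h v

/-- a vertex conveying the global minimum m with a neighbor conveying m keeps conveying m -/
lemma step_keep (c : (V → Finset W) × (V → W)) (u : V) (m : W) (x y : V)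
    (hx : c.2 x = m) (hadj : G.Adj x y) (hy : c.2 y = m)
    (hLB : ∀ v, m ≤ c.2 v) : (step G c u).2 x = m := by
  by_cases hv : x = u
  · subst hv
    by_cases hN : (Nset G c.1 c.2 x).Nonempty
    · rw [step_snd_grow G c x hN]; exact hx
    · have hmC : m ∈ conveyed G c.2 x := (mem_conveyed G).2 ⟨y, hadj, hy⟩
      have hmB := (conveyed_not_Nset G hmC hN).2
      have hB : (Bset G c.1 c.2 x).Nonempty := ⟨m, hmB⟩
      rw [(step_collapse G c x hN hB).2]
      apply le_antisymm (Finset.min'_le _ _ hmB)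
      obtain ⟨⟨w, _, hw⟩, _⟩ := mem_Bset G (Finset.min'_mem _ hB)
      exact hw ▸ hLB w
  · rw [step_snd_ne G c u x hv]; exact hx

/-- at a non-growing update with a neighbor conveying the global min m, the vertex adopts m -/
lemma step_lock (c : (V → Finset W) × (V → W)) (x : V) (m : W) (y : V)
    (hadj : G.Adj x y) (hy : c.2 y = m) (hLB : ∀ v, m ≤ c.2 v)
    (hN : ¬ (Nset G c.1 c.2 x).Nonempty) : (step G c x).2 x = m := by
  have hmC : m ∈ conveyed G c.2 x := (mem_conveyed G).2 ⟨y, hadj, hy⟩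
  have hmB := (conveyed_not_Nset G hmC hN).2
  have hB : (Bset G c.1 c.2 x).Nonempty := ⟨m, hmB⟩
  rw [(step_collapse G c x hN hB).2]
  apply le_antisymm (Finset.min'_le _ _ hmB)
  obtain ⟨⟨w, _, hw⟩, _⟩ := mem_Bset G (Finset.min'_mem _ hB)
  exact hw ▸ hLB w

/-- if the conveyed word of the updated vertex changed to m, then some neighbor conveyed m
and the Nset was empty -/
lemma step_back (c : (V → Finset W) × (V → W)) (v : V) (m : W)
    (h : (step G c v).2 v = m) (hne : c.2 v ≠ m) :
    (∃ w, G.Adj v w ∧ c.2 w = m) ∧ ¬ (Nset G c.1 c.2 v).Nonempty := by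
  by_cases hN : (Nset G c.1 c.2 v).Nonempty
  · exfalso; rw [step_snd_grow G c v hN] at h; exact hne h
  · by_cases hB : (Bset G c.1 c.2 v).Nonempty
    · rw [(step_collapse G c v hN hB).2] at h
      have := Finset.min'_mem (Bset G c.1 c.2 v) hB
      rw [h] at this
      exact ⟨(mem_Bset G this).1, hN⟩
    · exfalso; rw [step_idle G c v hN hB] at h; exact hne h

/-- growth strictly enlarges memory -/
lemma step_grow_ssubset (c : (V → Finset W) × (V → W)) (u : V)
    (hN : (Nset G c.1 c.2 u).Nonempty) : c.1 u ⊂ (step G c u).1 u := by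
  rw [step_fst_grow G c u hN]
  refine ⟨Finset.subset_union_left, fun hsub => ?_⟩
  obtain ⟨w, hw⟩ := hN
  have h2 : w ∈ Nset G c.1 c.2 u := hw
  simp only [Nset, Finset.mem_filter] at h2
  exact h2.2 (hsub (Finset.mem_union_right _ hw))

end Aux
section Chain
lemma chain_le {α : Type*} [Preorder α] (f : ℕ → α) (a b : ℕ) (hab : a ≤ b)
    (h : ∀ t, a ≤ t → t < b → f t ≤ f (t+1)) : f a ≤ f b := by
  obtain ⟨d, rfl⟩ := Nat.exists_eq_add_of_le hab
  induction d with
  | zero => simp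
  | succ k ih =>
    have h1 : f a ≤ f (a + k) := ih (by omega) (fun t ht1 ht2 => h t ht1 (by omega))
    have h2 : f (a + k) ≤ f (a + k + 1) := h (a+k) (by omega) (by omega)
    calc f a ≤ f (a+k) := h1
    _ ≤ f (a + (k+1)) := by rw [show a + (k+1) = a + k + 1 by ring]; exact h2
end Chain

section Sched
variable [Fintype V] [DecidableEq V] [Nonempty V]

lemma sched (e : Fin (Fintype.card V) ≃ V) (π : ℕ → V)
    (hπ : ∀ t, π t = e ⟨t % Fintype.card V, Nat.mod_lt t Fintype.card_pos⟩)
    (t0 : ℕ) (u : V) : ∃ t, t0 ≤ t ∧ t < t0 + 2 * Fintype.card V ∧ π t = u := by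
  have hnpos : 0 < Fintype.card V := Fintype.card_pos
  have hrlt : ((e.symm u : Fin (Fintype.card V)) : ℕ) < Fintype.card V := (e.symm u).isLt
  have hdm : Fintype.card V * (t0 / Fintype.card V) + t0 % Fintype.card V = t0 :=
    Nat.div_add_mod t0 _
  have hml : t0 % Fintype.card V < Fintype.card V := Nat.mod_lt t0 hnpos
  have hexp : (t0 / Fintype.card V + 1) * Fintype.card V
      = Fintype.card V * (t0 / Fintype.card V) + Fintype.card V := by ring
  refine ⟨((e.symm u : Fin (Fintype.card V)) : ℕ) + (t0 / Fintype.card V + 1) * Fintype.card V,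
    ?_, ?_, ?_⟩
  · omega
  · omega
  · rw [hπ]
    have hmod : (((e.symm u : Fin (Fintype.card V)) : ℕ)
        + (t0 / Fintype.card V + 1) * Fintype.card V) % Fintype.card V
        = ((e.symm u : Fin (Fintype.card V)) : ℕ) := by
      rw [Nat.add_mul_mod_self_right]; exact Nat.mod_eq_of_lt hrlt
    refine (Equiv.apply_eq_iff_eq_symm_apply e).mpr ?_
    exact Fin.ext (by simpa using hmod)
end Sched

section Traj
variable [Fintype V] [DecidableEq V] [DecidableEq W] [LinearOrder W]
  (G : SimpleGraph V) [DecidableRel G.Adj]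
  (π : ℕ → V) (traj : ℕ → (V → Finset W) × (V → W))

/-- lower bound on all conveyed words persists -/
lemma LB_persist (hstep : ∀ t, traj (t+1) = step G (traj t) (π t)) (m : W) (t0 : ℕ)
    (h : ∀ v, m ≤ (traj t0).2 v) : ∀ t, t0 ≤ t → ∀ v, m ≤ (traj t).2 v := by
  intro t ht
  induction t with
  | zero => exact (Nat.le_zero.mp ht) ▸ h
  | succ k ih =>
    rcases Nat.lt_or_ge t0 (k+1) with hlt | hge
    · rw [hstep k]; exact step_LB G (traj k) (π k) m (ih (by omega))
    · exact (Nat.le_antisymm ht hge) ▸ h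

/-- conv ∈ mem at all times -/
lemma Inv_persist (hstep : ∀ t, traj (t+1) = step G (traj t) (π t))
    (h : ∀ v, (traj 0).2 v ∈ (traj 0).1 v) : ∀ t v, (traj t).2 v ∈ (traj t).1 v := by
  intro t
  induction t with
  | zero => exact h
  | succ k ih => rw [hstep k]; exact step_inv G (traj k) (π k) ih

/-- containment in S0 at all times -/
lemma S0_persist (hstep : ∀ t, traj (t+1) = step G (traj t) (π t)) (S0 : Finset W)
    (h1 : ∀ v, (traj 0).2 v ∈ S0) (h2 : ∀ v, (traj 0).1 v ⊆ S0) :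
    ∀ t, (∀ v, (traj t).2 v ∈ S0) ∧ (∀ v, (traj t).1 v ⊆ S0) := by
  intro t
  induction t with
  | zero => exact ⟨h1, h2⟩
  | succ k ih =>
    rw [hstep k]; exact step_S0 G (traj k) (π k) S0 ih.1 ih.2

/-- a vertex conveying m with a permanent m-neighbor keeps conveying m -/
lemma locked_persist (hstep : ∀ t, traj (t+1) = step G (traj t) (π t))
    (x y : V) (m : W) (t1 : ℕ) (hadj : G.Adj x y)
    (hy : ∀ t, t1 ≤ t → (traj t).2 y = m)
    (hLB : ∀ t, t1 ≤ t → ∀ v, m ≤ (traj t).2 v)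
    (hx : (traj t1).2 x = m) : ∀ t, t1 ≤ t → (traj t).2 x = m := by
  intro t ht
  induction t with
  | zero => exact (Nat.le_zero.mp ht) ▸ hx
  | succ k ih =>
    rcases Nat.lt_or_ge t1 (k+1) with hlt | hge
    · have hk : t1 ≤ k := by omega
      rw [hstep k]
      exact step_keep G (traj k) (π k) m x y (ih hk) hadj (hy k hk) (hLB k hk)
    · exact (Nat.le_antisymm ht hge) ▸ hx

/-- memory of a vertex untouched by non-updates; growth chain gives cardinality bound -/
lemma growchain [Nonempty V] (e : Fin (Fintype.card V) ≃ V)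
    (hπ : ∀ t, π t = e ⟨t % Fintype.card V, Nat.mod_lt t Fintype.card_pos⟩)
    (v : V) (a k : ℕ)
    (hmono : ∀ t, a ≤ t → t < a + 2 * Fintype.card V * k → (traj t).1 v ⊆ (traj (t+1)).1 v)
    (hgrow : ∀ t, a ≤ t → t < a + 2 * Fintype.card V * k → π t = v →
      (traj t).1 v ⊂ (traj (t+1)).1 v) :
    ((traj a).1 v).card + k ≤ ((traj (a + 2 * Fintype.card V * k)).1 v).card := by
  induction k generalizing a with
  | zero => simp
  | succ k ih =>
    obtain ⟨t', ht1, ht2, ht3⟩ := sched e π hπ a v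
    have hexp0 : 2 * Fintype.card V * (k+1) = 2 * Fintype.card V + 2 * Fintype.card V * k := by
      ring
    have hc1 : ((traj a).1 v).card ≤ ((traj t').1 v).card := by
      apply chain_le (fun t => ((traj t).1 v).card) a t' ht1
      intro t h1 h2
      exact Finset.card_le_card (hmono t h1 (by omega))
    have hc2 : ((traj t').1 v).card < ((traj (t'+1)).1 v).card :=
      Finset.card_lt_card (hgrow t' ht1 (by omega) ht3)
    have hc3 : ((traj (t'+1)).1 v).card ≤ ((traj (a + 2 * Fintype.card V)).1 v).card := by
      apply chain_le (fun t => ((traj t).1 v).card) _ _ (by omega)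
      intro t h1 h2
      exact Finset.card_le_card (hmono t (by omega) (by omega))
    have ih' := ih (a + 2 * Fintype.card V)
      (fun t h1 h2 => hmono t (by omega) (by omega))
      (fun t h1 h2 h3 => hgrow t (by omega) (by omega) h3)
    have heq : a + 2 * Fintype.card V + 2 * Fintype.card V * k
        = a + 2 * Fintype.card V * (k+1) := by ring
    rw [heq] at ih'
    omega

end Traj

noncomputable def mval [Fintype V] [Nonempty V] [DecidableEq W] [LinearOrder W]
    (traj : ℕ → (V → Finset W) × (V → W)) (t : ℕ) : W :=
  (Finset.univ.image (traj t).2).min'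
    (Finset.image_nonempty.mpr Finset.univ_nonempty)

section MVal
variable [Fintype V] [DecidableEq V] [DecidableEq W] [LinearOrder W] [Nonempty V]
  (G : SimpleGraph V) [DecidableRel G.Adj]
  (π : ℕ → V) (traj : ℕ → (V → Finset W) × (V → W))

lemma mval_le (t : ℕ) (v : V) : mval traj t ≤ (traj t).2 v :=
  Finset.min'_le _ _ (Finset.mem_image_of_mem _ (Finset.mem_univ v))

lemma mval_exists (t : ℕ) : ∃ v, (traj t).2 v = mval traj t := by
  have := Finset.min'_mem (Finset.univ.image (traj t).2)
    (Finset.image_nonempty.mpr Finset.univ_nonempty)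
  obtain ⟨v, _, hv⟩ := Finset.mem_image.1 this
  exact ⟨v, hv⟩

lemma mval_mono (hstep : ∀ t, traj (t+1) = step G (traj t) (π t)) {t t' : ℕ} (h : t ≤ t') :
    mval traj t ≤ mval traj t' := by
  apply Finset.le_min'
  intro y hy
  obtain ⟨v, _, hv⟩ := Finset.mem_image.1 hy
  rw [← hv]
  exact LB_persist G π traj hstep (mval traj t) t (mval_le traj t) t' h v

lemma window (e : Fin (Fintype.card V) ≃ V)
    (hπ : ∀ t, π t = e ⟨t % Fintype.card V, Nat.mod_lt t Fintype.card_pos⟩)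
    (hstep : ∀ t, traj (t+1) = step G (traj t) (π t))
    (S0 : Finset W)
    (hconvS0 : ∀ t v, (traj t).2 v ∈ S0)
    (hmemS0 : ∀ t v, (traj t).1 v ⊆ S0)
    (hInv : ∀ t v, (traj t).2 v ∈ (traj t).1 v)
    (hnbr : ∀ v : V, (G.neighborFinset v).Nonempty)
    (t0 : ℕ)
    (hnoP : ∀ t, t0 ≤ t → t ≤ t0 + 2 * Fintype.card V * (S0.card + 2) →
      ¬ ∃ x y, G.Adj x y ∧ (traj t).2 x = mval traj t ∧ (traj t).2 y = mval traj t) :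
    mval traj t0 < mval traj (t0 + 2 * Fintype.card V * (S0.card + 2)) := by
  set L := 2 * Fintype.card V * (S0.card + 2) with hL
  by_contra hcon
  push_neg at hcon
  have heq : mval traj (t0 + L) = mval traj t0 :=
    le_antisymm hcon (mval_mono G π traj hstep (by omega))
  set m := mval traj t0 with hm
  have hμ : ∀ t, t0 ≤ t → t ≤ t0 + L → mval traj t = m := fun t h1 h2 =>
    le_antisymm (heq ▸ mval_mono G π traj hstep h2) (mval_mono G π traj hstep h1)
  obtain ⟨v, hv⟩ := mval_exists traj (t0 + L)
  rw [heq] at hv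
  -- every time in the window, v conveys m
  have hback : ∀ k, k ≤ L → (traj (t0 + L - k)).2 v = m := by
    intro k
    induction k with
    | zero => intro _; simpa using hv
    | succ j ihj =>
      intro hk
      have hTT : t0 + L - j = (t0 + L - (j+1)) + 1 := by omega
      have ihv : (traj ((t0 + L - (j+1)) + 1)).2 v = m := by
        rw [← hTT]; exact ihj (by omega)
      set T := t0 + L - (j+1) with hT
      by_cases hπT : π T = v
      · by_cases hc : (traj T).2 v = m
        · exact hc
        · exfalso
          have hstepv : (step G (traj T) (π T)).2 v = m := by rw [← hstep T]; exact ihv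
          rw [hπT] at hstepv
          obtain ⟨⟨w, hadj, hw⟩, hN⟩ := step_back G (traj T) v m hstepv hc
          have hwv : w ≠ v := fun h => hc (h ▸ hw)
          have hw1 : (traj (T+1)).2 w = m := by
            rw [hstep T, step_snd_ne G (traj T) (π T) w (by rw [hπT]; exact hwv)]
            exact hw
          have hT1a : t0 ≤ T + 1 := by omega
          have hT1b : T + 1 ≤ t0 + L := by omega
          have hmv : mval traj (T+1) = m := hμ _ hT1a hT1b
          exact hnoP (T+1) hT1a hT1b
            ⟨v, w, hadj, by rw [hmv]; exact ihv, by rw [hmv]; exact hw1⟩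
      · have := ihv
        rw [hstep T, step_snd_ne G (traj T) (π T) v (fun hh => hπT hh.symm)] at this
        exact this
  have hconvv : ∀ t, t0 ≤ t → t ≤ t0 + L → (traj t).2 v = m := by
    intro t h1 h2
    have := hback (t0 + L - t) (by omega)
    rw [show t0 + L - (t0 + L - t) = t from by omega] at this
    exact this
  -- every update of v in the window grows its memory
  have hgrowall : ∀ t, t0 ≤ t → t < t0 + L → π t = v →
      (Nset G (traj t).1 (traj t).2 v).Nonempty := by
    intro t h1 h2 hπt
    by_contra hN
    obtain ⟨y, hy⟩ := hnbr v
    have hadjy : G.Adj v y := by rwa [SimpleGraph.mem_neighborFinset] at hy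
    have hyC : (traj t).2 y ∈ conveyed G (traj t).2 v :=
      (mem_conveyed G).2 ⟨y, hadjy, rfl⟩
    have hB : (Bset G (traj t).1 (traj t).2 v).Nonempty :=
      ⟨_, (conveyed_not_Nset G hyC hN).2⟩
    have hcol := (step_collapse G (traj t) v hN hB).2
    have hnext : (traj (t+1)).2 v = m := hconvv (t+1) (by omega) (by omega)
    rw [hstep t, hπt, hcol] at hnext
    have hmB : m ∈ Bset G (traj t).1 (traj t).2 v := hnext ▸ Finset.min'_mem _ hB
    obtain ⟨⟨w, hadj, hw⟩, _⟩ := mem_Bset G hmB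
    have hmvt : mval traj t = m := hμ t h1 (by omega)
    exact hnoP t h1 (by omega)
      ⟨v, w, hadj, by rw [hmvt]; exact hconvv t h1 (by omega), by rw [hmvt]; exact hw⟩
  -- the growth chain contradiction
  have hLL : 2 * Fintype.card V * (S0.card + 1) ≤ L := by
    rw [hL]; exact Nat.mul_le_mul_left _ (by omega)
  have hchain := growchain π traj e hπ v t0 (S0.card + 1)
    (by
      intro t h1 h2
      by_cases hπt : π t = v
      · have hss := (step_grow_ssubset G (traj t) v (hgrowall t h1 (by omega) hπt)).subset
        rw [hstep t, hπt]
        exact hss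
      · rw [hstep t, step_fst_ne G (traj t) (π t) v (fun hh => hπt hh.symm)])
    (by
      intro t h1 h2 hπt
      have := step_grow_ssubset G (traj t) v (hgrowall t h1 (by omega) hπt)
      rw [hstep t, hπt]
      exact this)
  have hcard1 : 1 ≤ ((traj t0).1 v).card := Finset.card_pos.2 ⟨_, hInv t0 v⟩
  have hcards : ((traj (t0 + 2 * Fintype.card V * (S0.card + 1))).1 v).card ≤ S0.card :=
    Finset.card_le_card (hmemS0 _ v)
  omega
end MVal

section Spread
variable [Fintype V] [DecidableEq V] [DecidableEq W] [LinearOrder W] [Nonempty V]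
  (G : SimpleGraph V) [DecidableRel G.Adj]
  (π : ℕ → V) (traj : ℕ → (V → Finset W) × (V → W))

lemma pair_persist (hstep : ∀ t, traj (t+1) = step G (traj t) (π t))
    (x y : V) (m : W) (t0 : ℕ) (hadj : G.Adj x y)
    (hx : (traj t0).2 x = m) (hy : (traj t0).2 y = m)
    (hLB : ∀ t, t0 ≤ t → ∀ v, m ≤ (traj t).2 v) :
    ∀ t, t0 ≤ t → (traj t).2 x = m ∧ (traj t).2 y = m := by
  intro t ht
  induction t with
  | zero =>
    have h0 : t0 = 0 := Nat.le_zero.mp ht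
    subst h0; exact ⟨hx, hy⟩
  | succ k ih =>
    rcases Nat.lt_or_ge t0 (k+1) with hlt | hge
    · have hk : t0 ≤ k := by omega
      obtain ⟨ihx, ihy⟩ := ih hk
      rw [hstep k]
      exact ⟨step_keep G (traj k) (π k) m x y ihx hadj ihy (hLB k hk),
             step_keep G (traj k) (π k) m y x ihy hadj.symm ihx (hLB k hk)⟩
    · have h0 : t0 = k + 1 := le_antisymm ht hge
      subst h0; exact ⟨hx, hy⟩

/-- a vertex with a permanent m-neighbor permanently conveys m after 2n(s+1) steps -/
lemma absorb (e : Fin (Fintype.card V) ≃ V)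
    (hπ : ∀ t, π t = e ⟨t % Fintype.card V, Nat.mod_lt t Fintype.card_pos⟩)
    (hstep : ∀ t, traj (t+1) = step G (traj t) (π t))
    (S0 : Finset W) (hmemS0 : ∀ t v, (traj t).1 v ⊆ S0)
    (hInv : ∀ t v, (traj t).2 v ∈ (traj t).1 v)
    (x y : V) (m : W) (t0 : ℕ) (hadj : G.Adj x y)
    (hy : ∀ t, t0 ≤ t → (traj t).2 y = m)
    (hLB : ∀ t, t0 ≤ t → ∀ v, m ≤ (traj t).2 v) :
    ∀ t, t0 + 2 * Fintype.card V * (S0.card + 1) ≤ t → (traj t).2 x = m := by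
  by_cases hex : ∃ t', t0 ≤ t' ∧ t' < t0 + 2 * Fintype.card V * (S0.card + 1) ∧ π t' = x ∧
      ¬ (Nset G (traj t').1 (traj t').2 x).Nonempty
  · obtain ⟨t', h1, h2, h3, h4⟩ := hex
    have hlock : (traj (t'+1)).2 x = m := by
      rw [hstep t', h3]
      exact step_lock G (traj t') x m y hadj (hy t' h1) (hLB t' h1) h4
    have hper := locked_persist G π traj hstep x y m (t'+1) hadj
      (fun t ht => hy t (by omega)) (fun t ht => hLB t (by omega)) hlock
    intro t ht; exact hper t (by omega)
  · push_neg at hex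
    exfalso
    have hchain := growchain π traj e hπ x t0 (S0.card + 1)
      (by
        intro t h1 h2
        by_cases hπt : π t = x
        · have hss := (step_grow_ssubset G (traj t) x (hex t h1 h2 hπt)).subset
          rw [hstep t, hπt]
          exact hss
        · rw [hstep t, step_fst_ne G (traj t) (π t) x (fun hh => hπt hh.symm)])
      (by
        intro t h1 h2 hπt
        have := step_grow_ssubset G (traj t) x (hex t h1 h2 hπt)
        rw [hstep t, hπt]
        exact this)
    have hcard1 : 1 ≤ ((traj t0).1 x).card := Finset.card_pos.2 ⟨_, hInv t0 x⟩
    have hcards : ((traj (t0 + 2 * Fintype.card V * (S0.card + 1))).1 x).card ≤ S0.card :=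
      Finset.card_le_card (hmemS0 _ x)
    omega

lemma exists_pair (e : Fin (Fintype.card V) ≃ V)
    (hπ : ∀ t, π t = e ⟨t % Fintype.card V, Nat.mod_lt t Fintype.card_pos⟩)
    (hstep : ∀ t, traj (t+1) = step G (traj t) (π t))
    (S0 : Finset W)
    (hconvS0 : ∀ t v, (traj t).2 v ∈ S0)
    (hmemS0 : ∀ t v, (traj t).1 v ⊆ S0)
    (hInv : ∀ t v, (traj t).2 v ∈ (traj t).1 v)
    (hnbr : ∀ v : V, (G.neighborFinset v).Nonempty) :
    ∃ τ, τ ≤ (S0.card + 1) * (2 * Fintype.card V * (S0.card + 2)) ∧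
      ∃ x y, G.Adj x y ∧ (traj τ).2 x = mval traj τ ∧ (traj τ).2 y = mval traj τ := by
  by_contra hno
  have hno' : ∀ τ, τ ≤ (S0.card + 1) * (2 * Fintype.card V * (S0.card + 2)) →
      ¬ ∃ x y, G.Adj x y ∧ (traj τ).2 x = mval traj τ ∧ (traj τ).2 y = mval traj τ :=
    fun τ hτ hP => hno ⟨τ, hτ, hP⟩
  set L := 2 * Fintype.card V * (S0.card + 2) with hL
  have hstrict : ∀ k, k ≤ S0.card → mval traj (k * L) < mval traj ((k+1) * L) := by
    intro k hk
    have hwin := window G π traj e hπ hstep S0 hconvS0 hmemS0 hInv hnbr (k * L)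
      (by
        intro t h1 h2
        apply hno'
        have : (k+1) * L ≤ (S0.card + 1) * L := Nat.mul_le_mul_right _ (by omega)
        have he : (k+1) * L = k * L + L := by ring
        omega)
    have he : (k+1) * L = k * L + L := by ring
    rw [he]
    exact hwin
  have hrank : ∀ k, k ≤ S0.card + 1 →
      k ≤ (S0.filter (fun w => w < mval traj (k * L))).card := by
    intro k
    induction k with
    | zero => intro _; omega
    | succ j ihj =>
      intro hj
      have hij := ihj (by omega)
      have hlt := hstrict j (by omega)
      have hmem : mval traj (j * L) ∈ S0 := by
        obtain ⟨v, hv⟩ := mval_exists traj (j * L)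
        exact hv ▸ hconvS0 (j * L) v
      have hsub : insert (mval traj (j * L))
          (S0.filter (fun w => w < mval traj (j * L)))
          ⊆ S0.filter (fun w => w < mval traj ((j+1) * L)) := by
        intro w hw
        rcases Finset.mem_insert.1 hw with h | h
        · subst h; exact Finset.mem_filter.2 ⟨hmem, hlt⟩
        · obtain ⟨hw1, hw2⟩ := Finset.mem_filter.1 h
          exact Finset.mem_filter.2 ⟨hw1, lt_trans hw2 hlt⟩
      have hnotmem : mval traj (j * L) ∉ S0.filter (fun w => w < mval traj (j * L)) := by
        simp
      have := Finset.card_le_card hsub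
      rw [Finset.card_insert_of_notMem hnotmem] at this
      omega
  have hfin := hrank (S0.card + 1) le_rfl
  have : (S0.filter (fun w => w < mval traj ((S0.card + 1) * L))).card ≤ S0.card :=
    Finset.card_le_card (Finset.filter_subset _ _)
  omega

end Spread

section Conn
variable [Fintype V] [DecidableEq V] {G : SimpleGraph V} [DecidableRel G.Adj]

lemma walk_boundary (D : Finset V) :
    ∀ {a b : V} (_ : G.Walk a b), a ∈ D → b ∉ D → ∃ x ∈ D, ∃ y, y ∉ D ∧ G.Adj x y := by
  intro a b w
  induction w with
  | nil => intro ha hb; exact absurd ha hb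
  | @cons a c b h q ih =>
    intro ha hb
    by_cases hc : c ∈ D
    · exact ih hc hb
    · exact ⟨a, ha, c, hc, h⟩

lemma boundary (hG : G.Connected) (D : Finset V) (hD : D.Nonempty)
    (hne : D ≠ Finset.univ) : ∃ x ∈ D, ∃ y, y ∉ D ∧ G.Adj x y := by
  obtain ⟨d, hd⟩ := hD
  obtain ⟨v, hv⟩ : ∃ v, v ∉ D := by
    by_contra h
    push_neg at h
    exact hne (Finset.eq_univ_iff_forall.2 h)
  obtain ⟨w⟩ := hG.preconnected d v
  exact walk_boundary D w hd hv

lemma nbr_nonempty (hG : G.Connected) (hcard : 1 < Fintype.card V) (v : V) :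
    (G.neighborFinset v).Nonempty := by
  obtain ⟨u, hu⟩ := Fintype.exists_ne_of_one_lt_card hcard v
  obtain ⟨w⟩ := hG.preconnected v u
  cases w with
  | nil => exact absurd rfl hu
  | cons h q => exact ⟨_, by rw [SimpleGraph.mem_neighborFinset]; exact h⟩
end Conn

section Final
variable [Fintype V] [DecidableEq V] [DecidableEq W] [LinearOrder W] [Nonempty V]
  (G : SimpleGraph V) [DecidableRel G.Adj]
  (π : ℕ → V) (traj : ℕ → (V → Finset W) × (V → W))

lemma spread (e : Fin (Fintype.card V) ≃ V)
    (hπ : ∀ t, π t = e ⟨t % Fintype.card V, Nat.mod_lt t Fintype.card_pos⟩)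
    (hstep : ∀ t, traj (t+1) = step G (traj t) (π t))
    (hG : G.Connected) (S0 : Finset W)
    (hmemS0 : ∀ t v, (traj t).1 v ⊆ S0)
    (hInv : ∀ t v, (traj t).2 v ∈ (traj t).1 v)
    (x y : V) (m : W) (τ : ℕ) (hadj : G.Adj x y)
    (hx : ∀ t, τ ≤ t → (traj t).2 x = m) (hy : ∀ t, τ ≤ t → (traj t).2 y = m)
    (hLB : ∀ t, τ ≤ t → ∀ v, m ≤ (traj t).2 v) :
    ∀ k, ∃ D : Finset V, (k + 2 ≤ D.card ∨ D = Finset.univ) ∧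
      ∀ u ∈ D, ∀ t, τ + 2 * Fintype.card V * (S0.card + 1) * k ≤ t → (traj t).2 u = m := by
  intro k
  induction k with
  | zero =>
    refine ⟨{x, y}, Or.inl ?_, ?_⟩
    · rw [Finset.card_insert_of_notMem (by simp [hadj.ne]), Finset.card_singleton]
    · intro u hu t ht
      simp only [Nat.mul_zero, Nat.add_zero] at ht
      rcases Finset.mem_insert.1 hu with h | h
      · subst h; exact hx t ht
      · rw [Finset.mem_singleton.1 h]; exact hy t ht
  | succ k ih =>
    obtain ⟨D, hcard, hall⟩ := ih
    have hexp : 2 * Fintype.card V * (S0.card+1) * (k+1)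
        = 2 * Fintype.card V * (S0.card+1) * k + 2 * Fintype.card V * (S0.card+1) := by ring
    by_cases hD : D = Finset.univ
    · exact ⟨D, Or.inr hD, fun u hu t ht => hall u hu t (by omega)⟩
    · have hDne : D.Nonempty := by
        rcases hcard with h | h
        · exact Finset.card_pos.1 (by omega)
        · exact absurd h hD
      obtain ⟨d, hd, u, hu, hadj'⟩ := boundary hG D hDne hD
      have hdper : ∀ t, τ + 2 * Fintype.card V * (S0.card+1) * k ≤ t → (traj t).2 d = m :=
        fun t ht => hall d hd t ht
      have habs := absorb G π traj e hπ hstep S0 hmemS0 hInv u d m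
        (τ + 2 * Fintype.card V * (S0.card+1) * k) hadj'.symm hdper
        (fun t ht v => hLB t (by omega) v)
      refine ⟨insert u D, ?_, ?_⟩
      · left
        rw [Finset.card_insert_of_notMem hu]
        rcases hcard with h | h
        · omega
        · exact absurd h hD
      · intro w hw t ht
        rcases Finset.mem_insert.1 hw with h | h
        · subst h; exact habs t (by omega)
        · exact hall w h t (by omega)

lemma all_m_mem (e : Fin (Fintype.card V) ≃ V)
    (hπ : ∀ t, π t = e ⟨t % Fintype.card V, Nat.mod_lt t Fintype.card_pos⟩)
    (hstep : ∀ t, traj (t+1) = step G (traj t) (π t))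
    (hnbr : ∀ v : V, (G.neighborFinset v).Nonempty)
    (hInv : ∀ t v, (traj t).2 v ∈ (traj t).1 v)
    (m : W) (T1 : ℕ)
    (hall : ∀ u, ∀ t, T1 ≤ t → (traj t).2 u = m) :
    ∀ u, (traj (T1 + 2 * Fintype.card V)).1 u = {m} := by
  have hcoll : ∀ t, T1 ≤ t → ∀ u, π t = u → (traj (t+1)).1 u = {m} := by
    intro t ht u hπt
    have hconveq : ∀ w, w ∈ conveyed G (traj t).2 u → w = m := by
      intro w hw
      obtain ⟨v', hadj, hv'⟩ := (mem_conveyed G).1 hw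
      rw [← hv']; exact hall v' t ht
    have hmmem : m ∈ (traj t).1 u := by
      have := hInv t u
      rwa [hall u t ht] at this
    have hN : ¬ (Nset G (traj t).1 (traj t).2 u).Nonempty := by
      rw [Finset.not_nonempty_iff_eq_empty]
      apply Finset.filter_eq_empty_iff.2
      intro w hw
      simp only [not_not]
      rw [hconveq w hw]
      exact hmmem
    have hmC : m ∈ conveyed G (traj t).2 u := by
      obtain ⟨y, hy⟩ := hnbr u
      have hadj : G.Adj u y := by rwa [SimpleGraph.mem_neighborFinset] at hy
      exact (mem_conveyed G).2 ⟨y, hadj, hall y t ht⟩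
    have hmB := (conveyed_not_Nset G hmC hN).2
    have hB : (Bset G (traj t).1 (traj t).2 u).Nonempty := ⟨m, hmB⟩
    have hmin : (Bset G (traj t).1 (traj t).2 u).min' hB = m :=
      hconveq _ (Finset.filter_subset _ _ (Finset.min'_mem _ hB))
    rw [hstep t, hπt, (step_collapse G (traj t) u hN hB).1, hmin]
  have hkeep : ∀ u, ∀ t, T1 ≤ t → (traj t).1 u = {m} → (traj (t+1)).1 u = {m} := by
    intro u t ht hmem
    by_cases hπt : π t = u
    · exact hcoll t ht u hπt
    · rw [hstep t, step_fst_ne G (traj t) (π t) u (fun hh => hπt hh.symm)]; exact hmem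
  intro u
  obtain ⟨t', h1, h2, h3⟩ := sched e π hπ T1 u
  have hstart : (traj (t'+1)).1 u = {m} := hcoll t' h1 u h3
  have hchain : ∀ d, t' + 1 + d ≤ T1 + 2 * Fintype.card V →
      (traj (t' + 1 + d)).1 u = {m} := by
    intro d
    induction d with
    | zero => intro _; simpa using hstart
    | succ j ihj =>
      intro hd
      have hprev := ihj (by omega)
      rw [show t' + 1 + (j+1) = (t' + 1 + j) + 1 from by ring]
      exact hkeep u (t' + 1 + j) (by omega) hprev
  have := hchain (T1 + 2 * Fintype.card V - (t'+1)) (by omega)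
  rwa [show t' + 1 + (T1 + 2 * Fintype.card V - (t'+1)) = T1 + 2 * Fintype.card V
    from by omega] at this

lemma fix_config (c : (V → Finset W) × (V → W)) (m : W)
    (hnbr : ∀ v : V, (G.neighborFinset v).Nonempty)
    (hmem : ∀ u, c.1 u = {m}) (hconv : ∀ u, c.2 u = m) :
    ∀ u, step G c u = c := by
  intro u
  have hconveq : ∀ w, w ∈ conveyed G c.2 u → w = m := by
    intro w hw
    obtain ⟨v', hadj, hv'⟩ := (mem_conveyed G).1 hw
    rw [← hv']; exact hconv v'
  have hmmem : m ∈ c.1 u := by rw [hmem u]; exact Finset.mem_singleton_self m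
  have hN : ¬ (Nset G c.1 c.2 u).Nonempty := by
    rw [Finset.not_nonempty_iff_eq_empty]
    apply Finset.filter_eq_empty_iff.2
    intro w hw
    simp only [not_not]
    rw [hconveq w hw]
    exact hmmem
  have hmC : m ∈ conveyed G c.2 u := by
    obtain ⟨y, hy⟩ := hnbr u
    have hadj : G.Adj u y := by rwa [SimpleGraph.mem_neighborFinset] at hy
    exact (mem_conveyed G).2 ⟨y, hadj, hconv y⟩
  have hmB := (conveyed_not_Nset G hmC hN).2
  have hB : (Bset G c.1 c.2 u).Nonempty := ⟨m, hmB⟩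
  have hmin : (Bset G c.1 c.2 u).min' hB = m :=
    hconveq _ (Finset.filter_subset _ _ (Finset.min'_mem _ hB))
  unfold step
  rw [if_neg hN, dif_pos hB, hmin]
  rw [show ({m} : Finset W) = c.1 u from (hmem u).symm,
    show m = c.2 u from (hconv u).symm]
  rw [Function.update_eq_self, Function.update_eq_self]

end Final

/-- ε = 0, sequential scheme, on any connected simple graph with `n` vertices and a
word set of size `p`: the dynamics reaches, within `O(n² p)` time steps, a fixed
point in which every vertex conveys the same word. -/
theorem sequential_convergence :
    ∃ C : ℕ, ∀ (V W : Type) [Fintype V] [DecidableEq V] [Nonempty V]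
      [Fintype W] [DecidableEq W] [LinearOrder W]
      (G : SimpleGraph V) [DecidableRel G.Adj], G.Connected →
      ∀ (e : Fin (Fintype.card V) ≃ V) (π : ℕ → V),
        (∀ t, π t = e ⟨t % Fintype.card V, Nat.mod_lt t Fintype.card_pos⟩) →
      ∀ (traj : ℕ → (V → Finset W) × (V → W)),
        (∀ v, (traj 0).1 v = {(traj 0).2 v}) →
        (∀ t, traj (t + 1) = step G (traj t) (π t)) →
      ∃ T ≤ C * (Fintype.card V) ^ 2 * Fintype.card W,
        (∀ u : V, step G (traj T) u = traj T) ∧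
        (∃ m : W, ∀ u : V, (traj T).2 u = m) ∧
        (∀ t ≥ T, traj t = traj T) := by
  refine ⟨100, ?_⟩
  intro V W _ _ _ _ _ _ G _ hG e π hπ traj hinit hstep
  by_cases hn1 : Fintype.card V ≤ 1
  · -- single vertex: everything is already fixed
    have hsub : ∀ u v : V, u = v := fun u v => Fintype.card_le_one_iff.1 hn1 u v
    have hstepid : ∀ t u, step G (traj t) u = traj t := by
      intro t u
      have hnbrE : G.neighborFinset u = ∅ := by
        rw [Finset.eq_empty_iff_forall_notMem]
        intro w hw
        rw [SimpleGraph.mem_neighborFinset] at hw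
        exact G.ne_of_adj hw (hsub u w)
      have hNe : Nset G (traj t).1 (traj t).2 u = ∅ := by
        simp [Nset, conveyed, hnbrE]
      have hBe : Bset G (traj t).1 (traj t).2 u = ∅ := by
        simp [Bset, conveyed, hnbrE]
      exact step_idle G (traj t) u (by simp [hNe]) (by simp [hBe])
    have hconst : ∀ t, traj t = traj 0 := by
      intro t
      induction t with
      | zero => rfl
      | succ k ih => rw [hstep k, ih]; exact hstepid 0 (π k)
    exact ⟨0, Nat.zero_le _, fun u => hstepid 0 u,
      ⟨(traj 0).2 (Classical.arbitrary V), fun u => by rw [hsub u (Classical.arbitrary V)]⟩,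
      fun t _ => hconst t⟩
  · push_neg at hn1
    have hnbr : ∀ v : V, (G.neighborFinset v).Nonempty := nbr_nonempty hG hn1
    set S0 := Finset.univ.image (traj 0).2 with hS0
    have hInv : ∀ t v, (traj t).2 v ∈ (traj t).1 v :=
      Inv_persist G π traj hstep
        (fun v => by rw [hinit v]; exact Finset.mem_singleton_self _)
    have hS0p : ∀ t, (∀ v, (traj t).2 v ∈ S0) ∧ (∀ v, (traj t).1 v ⊆ S0) :=
      S0_persist G π traj hstep S0
        (fun v => Finset.mem_image_of_mem _ (Finset.mem_univ v))
        (fun v => by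
          rw [hinit v]
          exact Finset.singleton_subset_iff.2
            (Finset.mem_image_of_mem _ (Finset.mem_univ v)))
    have hconvS0 : ∀ t v, (traj t).2 v ∈ S0 := fun t => (hS0p t).1
    have hmemS0 : ∀ t v, (traj t).1 v ⊆ S0 := fun t => (hS0p t).2
    obtain ⟨τ, hτ, x, y, hadj, hxm, hym⟩ :=
      exists_pair G π traj e hπ hstep S0 hconvS0 hmemS0 hInv hnbr
    set m := mval traj τ with hm
    have hLB : ∀ t, τ ≤ t → ∀ v, m ≤ (traj t).2 v :=
      LB_persist G π traj hstep m τ (fun v => mval_le traj τ v)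
    have hpair := pair_persist G π traj hstep x y m τ hadj hxm hym hLB
    obtain ⟨D, hcard, hall⟩ := spread G π traj e hπ hstep hG S0 hmemS0 hInv x y m τ hadj
      (fun t ht => (hpair t ht).1) (fun t ht => (hpair t ht).2) hLB (Fintype.card V)
    have hDuniv : D = Finset.univ := by
      rcases hcard with h | h
      · exfalso
        have := Finset.card_le_univ D
        omega
      · exact h
    set T1 := τ + 2 * Fintype.card V * (S0.card + 1) * Fintype.card V with hT1
    have hallm : ∀ u, ∀ t, T1 ≤ t → (traj t).2 u = m :=
      fun u t ht => hall u (hDuniv ▸ Finset.mem_univ u) t ht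
    have hmemT := all_m_mem G π traj e hπ hstep hnbr hInv m T1 hallm
    set T := T1 + 2 * Fintype.card V with hT
    have hconvT : ∀ u, (traj T).2 u = m := fun u => hallm u T (by omega)
    have hfix : ∀ u, step G (traj T) u = traj T :=
      fix_config G (traj T) m hnbr hmemT hconvT
    have hconst : ∀ t, T ≤ t → traj t = traj T := by
      intro t ht
      induction t with
      | zero =>
        have h0 : T = 0 := Nat.le_zero.mp ht
        rw [h0]
      | succ k ih =>
        rcases Nat.lt_or_ge T (k+1) with hlt | hge
        · have hk : T ≤ k := by omega
          rw [hstep k, ih hk]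
          exact hfix (π k)
        · have h0 : T = k + 1 := le_antisymm ht hge
          rw [h0]
    -- the time bound
    have hs1 : 1 ≤ S0.card :=
      Finset.card_pos.2 (Finset.image_nonempty.mpr Finset.univ_nonempty)
    have hsn : S0.card ≤ Fintype.card V := by
      have := Finset.card_image_le (s := (Finset.univ : Finset V)) (f := (traj 0).2)
      simpa using this
    have hsp : S0.card ≤ Fintype.card W := Finset.card_le_univ S0
    have hp1 : 1 ≤ Fintype.card W := @Fintype.card_pos W _ ⟨m⟩
    have hn0 : 1 ≤ Fintype.card V := by omega
    have hbound : T ≤ 100 * (Fintype.card V) ^ 2 * Fintype.card W := by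
      have hss : S0.card * S0.card ≤ Fintype.card V * Fintype.card W :=
        Nat.mul_le_mul hsn hsp
      have hpow : (Fintype.card V) ^ 2 = Fintype.card V * Fintype.card V := by ring
      have hB2 : (S0.card + 1) * (2 * Fintype.card V * (S0.card + 2))
          + 2 * Fintype.card V * (S0.card + 1) * Fintype.card V
          + 2 * Fintype.card V ≤ 100 * (Fintype.card V) ^ 2 * Fintype.card W := by
        rw [hpow]
        nlinarith [hss, hsn, hsp, hp1, hn0, hs1,
          Nat.mul_le_mul_left (Fintype.card V) hss,
          Nat.mul_le_mul_left (Fintype.card V * Fintype.card V) hsp,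
          Nat.mul_le_mul_left (Fintype.card V) hsn]
      omega
    exact ⟨T, hbound, hfix, ⟨m, hconvT⟩, fun t ht => hconst t ht⟩
end

section
/- In the naming game automata model with ε = 0, suppose at some time vertex u conveys word m, m is the minimum conveyed word over all vertices, and u has a neighbor v also conveying m with M_v = {m}; if M_u = {m} as well, then u and v convey m at all later times, regardless of the update order. -/
variable {V W : Type*}

/-- ε = 0: suppose vertex `u` conveys the word `m`, `m` is the minimum conveyed word
over all vertices, `u` has a neighbor `v` also conveying `m` with `M_v = {m}`, and
`M_u = {m}`.  Then `u` and `v` convey `m` at all later times, regardless of the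
update order. -/
theorem locked_minimal_pair [Fintype V] [DecidableEq V] [DecidableEq W]
    [LinearOrder W] (G : SimpleGraph V) [DecidableRel G.Adj] (hconn : G.Connected)
    (c : (V → Finset W) × (V → W)) (hvalid : ∀ w, c.2 w ∈ c.1 w)
    (u v : V) (m : W) (hadj : G.Adj u v)
    (hu : c.2 u = m) (hv : c.2 v = m) (hMu : c.1 u = {m}) (hMv : c.1 v = {m})
    (hmin : ∀ w : V, m ≤ c.2 w)
    (π : ℕ → V) (traj : ℕ → (V → Finset W) × (V → W))
    (h0 : traj 0 = c) (hstep : ∀ t, traj (t + 1) = step G (traj t) (π t)) :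
    ∀ t : ℕ, (traj t).2 u = m ∧ (traj t).2 v = m := by
  suffices H : ∀ t, (∀ w, m ≤ (traj t).2 w) ∧ (traj t).2 u = m ∧ (traj t).2 v = m
      ∧ m ∈ (traj t).1 u ∧ m ∈ (traj t).1 v by
    intro t; exact ⟨(H t).2.1, (H t).2.2.1⟩
  intro t
  induction t with
  | zero =>
    rw [h0]
    exact ⟨hmin, hu, hv, by simp [hMu], by simp [hMv]⟩
  | succ t ih =>
    obtain ⟨hmin', hu', hv', hmu', hmv'⟩ := ih
    rw [hstep t]
    unfold step
    set d := traj t with hd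
    set x := π t with hx
    -- every element of a B-set is ≥ m
    have hBge : ∀ (z : V) (y : W), y ∈ Bset G d.1 d.2 z → m ≤ y := by
      intro z y hy
      have : y ∈ conveyed G d.2 z := (Finset.mem_filter.mp hy).1
      obtain ⟨w, _, rfl⟩ := Finset.mem_image.mp this
      exact hmin' w
    -- m is in B-set of u and of v
    have hmBu : m ∈ Bset G d.1 d.2 u := by
      refine Finset.mem_filter.mpr ⟨Finset.mem_image.mpr ⟨v, ?_, hv'⟩, by simpa using hmu'⟩
      simpa [SimpleGraph.mem_neighborFinset] using hadj
    have hmBv : m ∈ Bset G d.1 d.2 v := by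
      refine Finset.mem_filter.mpr ⟨Finset.mem_image.mpr ⟨u, ?_, hu'⟩, by simpa using hmv'⟩
      simpa [SimpleGraph.mem_neighborFinset] using hadj.symm
    split_ifs with hN hB
    · -- N nonempty: conveyed words unchanged, memory of x grows
      have key : ∀ z : V, m ∈ d.1 z →
          m ∈ Function.update d.1 x (d.1 x ∪ Nset G d.1 d.2 x) z := by
        intro z hz
        rw [Function.update_apply]
        by_cases h : z = x
        · rw [if_pos h]; exact Finset.mem_union_left _ (h ▸ hz)
        · rw [if_neg h]; exact hz
      exact ⟨hmin', hu', hv', key u hmu', key v hmv'⟩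
    · -- collapse of x to min B_x
      have hminB : m ≤ (Bset G d.1 d.2 x).min' hB :=
        Finset.le_min' _ _ _ (fun y hy => hBge x y hy)
      have hcol : ∀ z, m ≤ Function.update d.2 x ((Bset G d.1 d.2 x).min' hB) z := by
        intro z
        by_cases h : z = x <;> simp [Function.update_apply, h, hminB, hmin' z]
      have hcu : x = u → (Bset G d.1 d.2 x).min' hB = m := by
        intro h; subst h
        exact le_antisymm (Finset.min'_le _ _ hmBu) hminB
      have hcv : x = v → (Bset G d.1 d.2 x).min' hB = m := by
        intro h; subst h
        exact le_antisymm (Finset.min'_le _ _ hmBv) hminB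
      have keyc : ∀ z : V, (x = z → (Bset G d.1 d.2 x).min' hB = m) → d.2 z = m →
          Function.update d.2 x ((Bset G d.1 d.2 x).min' hB) z = m := by
        intro z hc hz
        rw [Function.update_apply]
        by_cases h : z = x
        · rw [if_pos h]; exact hc h.symm
        · rw [if_neg h]; exact hz
      have keym : ∀ z : V, (x = z → (Bset G d.1 d.2 x).min' hB = m) → m ∈ d.1 z →
          m ∈ Function.update d.1 x ({(Bset G d.1 d.2 x).min' hB} : Finset W) z := by
        intro z hc hz
        rw [Function.update_apply]
        by_cases h : z = x
        · rw [if_pos h, hc h.symm]; exact Finset.mem_singleton_self m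
        · rw [if_neg h]; exact hz
      exact ⟨hcol, keyc u hcu hu', keyc v hcv hv', keym u hcu hmu', keym v hcv hmv'⟩
    · exact ⟨hmin', hu', hv', hmu', hmv'⟩
end
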